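/- arXiv:1605.04525 — 3 statements merged into one kernel-verified Lean document; each statement's English description precedes it below -/
import Mathlib

section
/- Let 0 < f < 1, N > 0. Define the probability mass function p on {0,1,…,K} by p(0) = 1 − (N/K)(1 − f^K) and p(n) = (N/K)·C(K,n)(1−f)^n f^{K−n} for n ≥ 1 (assuming K ≥ N so all values are in [0,1]). Then the Shannon entropy H(p) = −Σ_n p(n) log₂ p(n) tends to 0 as K → ∞. -/
/-- Fock-basis diagonal of the channel output for the input state
`√(1−N/K)|0⟩ + √(N/K)|K⟩`. -/
noncomputable def pOut (f N : ℝ) (K n : ℕ) : ℝ :=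
  if n = 0 then 1 - (N / K) * (1 - f ^ K)
  else (N / K) * (K.choose n) * (1 - f) ^ n * f ^ (K - n)

open Real Filter Finset Topology

/-- binomial weight -/
noncomputable def qB (f : ℝ) (K n : ℕ) : ℝ := (K.choose n : ℝ) * (1 - f) ^ n * f ^ (K - n)

lemma qB_sum (f : ℝ) (K : ℕ) : ∑ n ∈ range (K + 1), qB f K n = 1 := by
  have h := add_pow (1 - f) f K
  have h1 : (1 - f + f) = 1 := by ring
  rw [h1, one_pow] at h
  calc ∑ n ∈ range (K + 1), qB f K n
      = ∑ n ∈ range (K + 1), (1 - f) ^ n * f ^ (K - n) * (K.choose n : ℝ) :=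
        Finset.sum_congr rfl (fun n _ => by unfold qB; ring)
    _ = 1 := h.symm

lemma qB_nonneg {f : ℝ} (hf0 : 0 < f) (hf1 : f < 1) (K n : ℕ) : 0 ≤ qB f K n := by
  have h1 : (0:ℝ) < 1 - f := by linarith
  unfold qB
  positivity

lemma qB_le_one {f : ℝ} (hf0 : 0 < f) (hf1 : f < 1) {K n : ℕ} (hn : n ∈ range (K + 1)) :
    qB f K n ≤ 1 := by
  have := Finset.single_le_sum (f := fun m => qB f K m)
    (fun m _ => qB_nonneg hf0 hf1 K m) hn
  simpa [qB_sum f K] using this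

lemma qB_pos {f : ℝ} (hf0 : 0 < f) (hf1 : f < 1) {K n : ℕ} (hn : n ≤ K) :
    0 < qB f K n := by
  have h1 : (0:ℝ) < 1 - f := by linarith
  have h2 : (0:ℝ) < (K.choose n : ℝ) := by exact_mod_cast Nat.choose_pos hn
  unfold qB
  positivity

lemma qB_tail_sum {f : ℝ} (K : ℕ) :
    ∑ i ∈ range K, qB f K (i + 1) = 1 - f ^ K := by
  have h := qB_sum f K
  rw [Finset.sum_range_succ'] at h
  have h0 : qB f K 0 = f ^ K := by simp [qB]
  rw [h0] at h
  linarith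

/-- The key upper bound for sufficiently large `K`. -/
lemma entropy_upper (f N : ℝ) (hf0 : 0 < f) (hf1 : f < 1) (hN : 0 < N) (K : ℕ)
    (hK1 : 1 ≤ K) (hKN : N ≤ (K : ℝ)) :
    (-∑ n ∈ range (K + 1), pOut f N K n * log (pOut f N K n)) ≤
      -(pOut f N K 0 * log (pOut f N K 0)) + 2 * N * (log K / K) +
        (|log N| - log (1 - f)) * N * (K : ℝ)⁻¹ := by
  have hKpos : (0 : ℝ) < K := by exact_mod_cast hK1
  set c : ℝ := N / K with hc_def
  have hc : 0 < c := div_pos hN hKpos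
  have hc1 : c ≤ 1 := (div_le_one hKpos).mpr hKN
  have hf1' : (0:ℝ) < 1 - f := by linarith
  set S : ℝ := 1 - f ^ K with hS_def
  have hfKf : f ^ K ≤ f := by
    calc f ^ K ≤ f ^ 1 := pow_le_pow_of_le_one hf0.le hf1.le hK1
    _ = f := pow_one f
  have hS : 0 < S := by
    have h := lt_of_le_of_lt hfKf hf1
    show (0:ℝ) < 1 - f ^ K
    linarith
  have hS1 : S ≤ 1 := by
    have h : (0:ℝ) ≤ f ^ K := by positivity
    show 1 - f ^ K ≤ 1
    linarith
  have hSlb : 1 - f ≤ S := by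
    show 1 - f ≤ 1 - f ^ K
    linarith
  have hqsum : ∑ i ∈ range K, qB f K (i + 1) = S := qB_tail_sum K
  have hqpos : ∀ i ∈ range K, 0 < qB f K (i + 1) := fun i hi =>
    qB_pos hf0 hf1 (by have := Finset.mem_range.mp hi; omega)
  have hq : ∀ i ∈ range K, pOut f N K (i + 1) = c * qB f K (i + 1) := by
    intro i hi
    simp only [pOut, qB, if_neg (Nat.succ_ne_zero i), hc_def]
    ring
  have hlogK : 0 ≤ log K := Real.log_nonneg (by exact_mod_cast hK1)
  -- split the sum
  rw [Finset.sum_range_succ' (fun n => pOut f N K n * log (pOut f N K n)) K, neg_add]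
  -- main decomposition of the tail
  have hmain : -∑ i ∈ range K, pOut f N K (i + 1) * log (pOut f N K (i + 1)) =
      c * S * (-log c) +
        c * ∑ i ∈ range K, qB f K (i + 1) * (-log (qB f K (i + 1))) := by
    calc -∑ i ∈ range K, pOut f N K (i + 1) * log (pOut f N K (i + 1))
        = ∑ i ∈ range K, ((c * (-log c)) * qB f K (i + 1) +
            c * (qB f K (i + 1) * (-log (qB f K (i + 1))))) := by
          rw [← Finset.sum_neg_distrib]
          refine Finset.sum_congr rfl fun i hi => ?_
          rw [hq i hi, Real.log_mul hc.ne' (hqpos i hi).ne']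
          ring
      _ = (c * (-log c)) * (∑ i ∈ range K, qB f K (i + 1)) +
            c * ∑ i ∈ range K, qB f K (i + 1) * (-log (qB f K (i + 1))) := by
          rw [Finset.sum_add_distrib, Finset.mul_sum, Finset.mul_sum]
      _ = c * S * (-log c) +
            c * ∑ i ∈ range K, qB f K (i + 1) * (-log (qB f K (i + 1))) := by
          rw [hqsum]; ring
  -- Jensen bound for the binomial entropy part
  have hjen : ∑ i ∈ range K, qB f K (i + 1) * (-log (qB f K (i + 1))) ≤ S * log (K / S) := by
    have h₀ : ∀ i ∈ range K, 0 ≤ qB f K (i + 1) / S :=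
      fun i hi => div_nonneg (hqpos i hi).le hS.le
    have h₁ : ∑ i ∈ range K, qB f K (i + 1) / S = 1 := by
      rw [← Finset.sum_div, hqsum, div_self hS.ne']
    have hmem : ∀ i ∈ range K, (qB f K (i + 1))⁻¹ ∈ Set.Ioi (0:ℝ) :=
      fun i hi => Set.mem_Ioi.mpr (inv_pos.mpr (hqpos i hi))
    have hj := (strictConcaveOn_log_Ioi.concaveOn).le_map_sum h₀ h₁ hmem
    simp only [smul_eq_mul] at hj
    have hRHS : ∑ i ∈ range K, qB f K (i + 1) / S * (qB f K (i + 1))⁻¹ = K / S := by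
      have : ∀ i ∈ range K, qB f K (i + 1) / S * (qB f K (i + 1))⁻¹ = 1 / S := by
        intro i hi
        field_simp [(hqpos i hi).ne']
      rw [Finset.sum_congr rfl this, Finset.sum_const, Finset.card_range, nsmul_eq_mul]
      ring
    rw [hRHS] at hj
    have heq : ∑ i ∈ range K, qB f K (i + 1) * (-log (qB f K (i + 1))) =
        S * ∑ i ∈ range K, qB f K (i + 1) / S * log (qB f K (i + 1))⁻¹ := by
      rw [Finset.mul_sum]
      refine Finset.sum_congr rfl fun i hi => ?_
      rw [Real.log_inv]
      field_simp
    rw [heq]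
    exact mul_le_mul_of_nonneg_left hj hS.le
  -- bound S * log (K / S)
  have hJ2 : S * log ((K : ℝ) / S) ≤ log K + (-log (1 - f)) := by
    rw [Real.log_div hKpos.ne' hS.ne']
    have hlogS : log S ≤ 0 := Real.log_nonpos hS.le hS1
    have hloglb : log (1 - f) ≤ log S := Real.log_le_log hf1' hSlb
    nlinarith [mul_nonneg (by linarith : (0:ℝ) ≤ 1 - S) hlogK,
      mul_nonneg (by linarith : (0:ℝ) ≤ 1 - S) (by linarith : (0:ℝ) ≤ -log S)]
  -- bound c * S * (-log c)
  have hA : c * S * (-log c) ≤ c * (log K + |log N|) := by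
    have h0 : 0 ≤ -log c := neg_nonneg.mpr (Real.log_nonpos hc.le hc1)
    have hnl : -log c = log K - log N := by
      rw [hc_def, Real.log_div hN.ne' hKpos.ne']; ring
    have h1 : c * S * (-log c) ≤ c * (-log c) := by
      nlinarith [mul_nonneg (mul_nonneg hc.le (by linarith : (0:ℝ) ≤ 1 - S)) h0]
    refine h1.trans ?_
    refine mul_le_mul_of_nonneg_left ?_ hc.le
    rw [hnl]
    have := neg_le_abs (log N)
    linarith
  have hB : c * (∑ i ∈ range K, qB f K (i + 1) * (-log (qB f K (i + 1)))) ≤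
      c * (log K + (-log (1 - f))) :=
    mul_le_mul_of_nonneg_left (hjen.trans hJ2) hc.le
  have hfinal : c * (log K + |log N|) + c * (log K + (-log (1 - f))) =
      2 * N * (log K / K) + (|log N| - log (1 - f)) * N * (K : ℝ)⁻¹ := by
    rw [hc_def]; field_simp; ring
  linarith [hmain, hA, hB, hfinal.le]

theorem stmt_3 (f N : ℝ) (hf0 : 0 < f) (hf1 : f < 1) (hN : 0 < N) :
    Filter.Tendsto
      (fun K : ℕ =>
        -∑ n ∈ Finset.range (K + 1), pOut f N K n * Real.logb 2 (pOut f N K n))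
      Filter.atTop (nhds 0) := by
  have hrw : ∀ K : ℕ,
      (-∑ n ∈ range (K + 1), pOut f N K n * logb 2 (pOut f N K n)) =
      (-∑ n ∈ range (K + 1), pOut f N K n * log (pOut f N K n)) / log 2 := by
    intro K
    simp only [Real.logb, ← mul_div_assoc, ← Finset.sum_div, neg_div]
  simp only [hrw]
  have hf1' : (0:ℝ) < 1 - f := by linarith
  have hE : Tendsto (fun K : ℕ =>
      -∑ n ∈ range (K + 1), pOut f N K n * log (pOut f N K n)) atTop (𝓝 0) := by
    set B : ℕ → ℝ := fun K =>
      -(pOut f N K 0 * log (pOut f N K 0)) + 2 * N * (log K / K) +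
        (|log N| - log (1 - f)) * N * (K : ℝ)⁻¹ with hB_def
    have hBlim : Tendsto B atTop (𝓝 0) := by
      have hc : Tendsto (fun K : ℕ => N / K) atTop (𝓝 0) :=
        tendsto_const_div_atTop_nhds_zero_nat N
      have hp : Tendsto (fun K : ℕ => f ^ K) atTop (𝓝 0) :=
        tendsto_pow_atTop_nhds_zero_of_lt_one hf0.le hf1
      have h1 : Tendsto (fun K : ℕ => pOut f N K 0) atTop (𝓝 1) := by
        have : Tendsto (fun K : ℕ => 1 - (N / K) * (1 - f ^ K)) atTop
            (𝓝 (1 - 0 * (1 - 0))) :=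
          tendsto_const_nhds.sub (hc.mul (tendsto_const_nhds.sub hp))
        simpa [pOut] using this
      have hterm0 : Tendsto (fun K : ℕ => -(pOut f N K 0 * log (pOut f N K 0)))
          atTop (𝓝 0) := by
        have := (h1.mul (h1.log one_ne_zero)).neg
        simpa using this
      have hlogdiv : Tendsto (fun K : ℕ => log K / K) atTop (𝓝 0) :=
        Real.isLittleO_log_id_atTop.tendsto_div_nhds_zero.comp tendsto_natCast_atTop_atTop
      have hinv : Tendsto (fun K : ℕ => (K : ℝ)⁻¹) atTop (𝓝 0) :=
        tendsto_inv_atTop_nhds_zero_nat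
      have := (hterm0.add (hlogdiv.const_mul (2 * N))).add
        (hinv.const_mul ((|log N| - log (1 - f)) * N))
      simpa [hB_def, mul_comm] using this
    refine tendsto_of_tendsto_of_tendsto_of_le_of_le' tendsto_const_nhds hBlim ?_ ?_
    · -- 0 ≤ E K eventually
      filter_upwards [eventually_ge_atTop (max 1 ⌈N⌉₊)] with K hK
      have hK1 : 1 ≤ K := le_trans (le_max_left _ _) hK
      have hKN : N ≤ (K : ℝ) :=
        le_trans (Nat.le_ceil N) (by exact_mod_cast le_trans (le_max_right _ _) hK)
      have hKpos : (0 : ℝ) < K := by exact_mod_cast hK1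
      have hc0 : (0:ℝ) ≤ N / K := by positivity
      have hc1 : N / K ≤ 1 := (div_le_one hKpos).mpr hKN
      have hfK0 : (0:ℝ) ≤ f ^ K := by positivity
      have hfK1 : f ^ K ≤ 1 := pow_le_one₀ hf0.le hf1.le
      refine neg_nonneg.mpr (Finset.sum_nonpos fun n hn => ?_)
      have hp_mem : 0 ≤ pOut f N K n ∧ pOut f N K n ≤ 1 := by
        by_cases h0 : n = 0
        · subst h0
          have heq0 : pOut f N K 0 = 1 - (N / K) * (1 - f ^ K) := by simp [pOut]
          rw [heq0]
          constructor
          · nlinarith [mul_le_one₀ hc1 (by linarith : (0:ℝ) ≤ 1 - f ^ K)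
              (by linarith : 1 - f ^ K ≤ 1)]
          · nlinarith [mul_nonneg hc0 (by linarith : (0:ℝ) ≤ 1 - f ^ K)]
        · have heq : pOut f N K n = (N / K) * qB f K n := by
            simp only [pOut, if_neg h0, qB]; ring
          rw [heq]
          exact ⟨mul_nonneg hc0 (qB_nonneg hf0 hf1 K n),
            mul_le_one₀ hc1 (qB_nonneg hf0 hf1 K n) (qB_le_one hf0 hf1 hn)⟩
      exact mul_nonpos_iff.mpr (Or.inl ⟨hp_mem.1, Real.log_nonpos hp_mem.1 hp_mem.2⟩)
    · -- E K ≤ B K eventually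
      filter_upwards [eventually_ge_atTop (max 1 ⌈N⌉₊)] with K hK
      have hK1 : 1 ≤ K := le_trans (le_max_left _ _) hK
      have hKN : N ≤ (K : ℝ) :=
        le_trans (Nat.le_ceil N) (by exact_mod_cast le_trans (le_max_right _ _) hK)
      exact entropy_upper f N hf0 hf1 hN K hK1 hKN
  have := hE.div_const (log 2)
  simpa using this
end

section
/- Let H be a self-adjoint operator on ℂ^d with spectral decomposition H = Σ_j h_j |j⟩⟨j|, and let ρ be a density operator on ℂ^d with Tr(ρH) = N. Then there exist unit vectors ψ_k ∈ ℂ^d and weights p_k > 0 with Σ_k p_k = 1 such that ρ = Σ_k p_k |ψ_k⟩⟨ψ_k| and ⟨ψ_k| H |ψ_k⟩ = N for every k. -/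
/-!
Write `ρ = ∑ᵢ |xᵢ⟩⟨xᵢ|` and `K = H - N`. The real numbers `⟨xᵢ|K|xᵢ⟩` sum to `Tr (ρ K) = 0`.
Rotating a pair `(x, y)` to `(cos t • x - sin t • y, sin t • x + cos t • y)` does not change
`|x⟩⟨x| + |y⟩⟨y|`, and at `t = π / 2` the first vector is `-y`; so when `⟨x|K|x⟩` and `⟨y|K|y⟩`
have opposite signs, the intermediate value theorem gives a rotation making the first vector
`K`-null. Induction on the number of vectors makes all of them `K`-null, and normalising the
nonzero ones gives the ensemble.
-/

open Matrix Finset Function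
open scoped ComplexOrder

local notation "ketbra " x:max => vecMulVec x (star x)

variable {n : Type*}

theorem ketbra_neg (x : n → ℂ) : ketbra (-x) = ketbra x := by
  simp [star_neg, vecMulVec_neg, neg_vecMulVec]

theorem ketbra_rotate_add (x y : n → ℂ) (t : ℝ) :
    ketbra (Real.cos t • x - Real.sin t • y) + ketbra (Real.sin t • x + Real.cos t • y) =
      ketbra x + ketbra y := by
  have h := Complex.cos_sq_add_sin_sq (t : ℂ)
  ext i j
  simp only [star_sub, star_add, star_smul, star_trivial, Matrix.add_apply, vecMulVec_apply,
    Pi.sub_apply, Pi.add_apply, Pi.smul_apply, Pi.star_apply, Complex.real_smul,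
    Complex.ofReal_cos, Complex.ofReal_sin, RCLike.star_def]
  linear_combination (x i * (starRingEnd ℂ) (x j) + y i * (starRingEnd ℂ) (y j)) * h

theorem exists_ketbra_add_eq_and_eq_zero {F : Matrix n n ℂ → ℝ} (hF : Continuous F)
    {x y : n → ℂ} (hxy : F (ketbra x) * F (ketbra y) ≤ 0) :
    ∃ x' y' : n → ℂ, ketbra x' + ketbra y' = ketbra x + ketbra y ∧ F (ketbra x') = 0 := by
  set r : ℝ → n → ℂ := fun t => Real.cos t • x - Real.sin t • y
  have hcont : Continuous fun t => F (ketbra (r t)) := by fun_prop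
  have h0 : (0 : ℝ) ∈ Set.uIcc (F (ketbra (r 0))) (F (ketbra (r (Real.pi / 2)))) := by
    simp only [r, Real.cos_zero, Real.sin_zero, Real.cos_pi_div_two, Real.sin_pi_div_two,
      one_smul, zero_smul, sub_zero, zero_sub, ketbra_neg]
    rcases mul_nonpos_iff.mp hxy with h | h
    · exact Set.mem_uIcc_of_ge h.2 h.1
    · exact Set.mem_uIcc_of_le h.1 h.2
  obtain ⟨t, -, ht⟩ := intermediate_value_uIcc hcont.continuousOn h0
  exact ⟨r t, _, ketbra_rotate_add x y t, ht⟩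

theorem Finset.sum_comp_update_of_mem {ι α β : Type*} [DecidableEq ι] [AddCommGroup β]
    {s : Finset ι} {b : ι} (hb : b ∈ s) (g : α → β) (x : ι → α) (v : α) :
    ∑ i ∈ s, g (update x b v i) = ∑ i ∈ s, g (x i) + (g v - g (x b)) := by
  rw [← add_sum_erase s _ hb, ← add_sum_erase s _ hb, update_self,
    sum_congr rfl fun i hi => by rw [update_of_ne (ne_of_mem_erase hi)]]
  abel

theorem Finset.exists_mem_mul_nonpos_of_add_sum_eq_zero {ι : Type*} {s : Finset ι}
    {f : ι → ℝ} {c : ℝ} (hc : c ≠ 0) (h : c + ∑ i ∈ s, f i = 0) : ∃ b ∈ s, c * f b ≤ 0 := by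
  by_contra! hpos
  have : 0 ≤ c * ∑ i ∈ s, f i := mul_sum s f c ▸ sum_nonneg fun i hi => (hpos i hi).le
  rw [eq_neg_of_add_eq_zero_right h] at this
  nlinarith [sq_pos_of_ne_zero hc]

theorem exists_sum_ketbra_eq_forall_map_eq_zero {φ : Matrix n n ℂ →+ ℝ} (hφ : Continuous φ)
    {ι : Type*} [DecidableEq ι] (s : Finset ι) (x : ι → n → ℂ)
    (hx : φ (∑ i ∈ s, ketbra (x i)) = 0) :
    ∃ y : ι → n → ℂ, ∑ i ∈ s, ketbra (y i) = ∑ i ∈ s, ketbra (x i) ∧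
      ∀ i ∈ s, φ (ketbra (y i)) = 0 := by
  induction s using Finset.induction_on generalizing x with
  | empty => exact ⟨x, rfl, by simp⟩
  | insert a s ha ih =>
    rw [sum_insert ha, map_add] at hx
    suffices ∃ (v : n → ℂ) (z : ι → n → ℂ), φ (ketbra v) = 0 ∧
        (∀ i ∈ s, φ (ketbra (z i)) = 0) ∧
        ketbra v + ∑ i ∈ s, ketbra (z i) = ketbra (x a) + ∑ i ∈ s, ketbra (x i) by
      obtain ⟨v, z, hv, hz, hsum⟩ := this
      have hupd : ∀ i ∈ s, update z a v i = z i := fun i hi =>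
        update_of_ne (ne_of_mem_of_not_mem hi ha) _ _
      refine ⟨update z a v, ?_, ?_⟩
      · rw [sum_insert ha, sum_insert ha, update_self,
          sum_congr rfl fun i hi => by rw [hupd i hi], hsum]
      · simpa [forall_mem_insert, hv] using fun i hi => hupd i hi ▸ hz i hi
    by_cases ha0 : φ (ketbra (x a)) = 0
    · obtain ⟨z, hz, hz0⟩ := ih x (by linarith)
      exact ⟨x a, z, ha0, hz0, by rw [hz]⟩
    obtain ⟨b, hb, hab⟩ :=
      exists_mem_mul_nonpos_of_add_sum_eq_zero ha0 (by simpa [map_sum] using hx)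
    obtain ⟨x', y', hxy, hx'⟩ := exists_ketbra_add_eq_and_eq_zero hφ hab
    have hsum : ∑ i ∈ s, ketbra (update x b y' i) =
        ∑ i ∈ s, ketbra (x i) + (ketbra y' - ketbra (x b)) :=
      sum_comp_update_of_mem hb (fun v => ketbra v) x y'
    obtain ⟨z, hz, hz0⟩ := ih (update x b y') (by
      have := congrArg φ hxy
      rw [hsum, map_add, map_sub]
      simp only [map_add] at this
      linarith)
    refine ⟨x', z, hx', hz0, ?_⟩
    rw [hz, hsum, eq_sub_of_add_eq hxy]
    abel

theorem ketbra_real_smul (r : ℝ) (x : n → ℂ) :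
    ketbra (r • x) = ((r ^ 2 : ℝ) : ℂ) • ketbra x := by
  ext i j
  simp only [vecMulVec_apply, star_smul, star_trivial, Pi.smul_apply, Pi.star_apply,
    Matrix.smul_apply, Complex.real_smul, smul_eq_mul, Complex.ofReal_pow]
  ring

variable [Fintype n]

theorem star_dotProduct_self (x : n → ℂ) :
    star x ⬝ᵥ x = ((∑ j, Complex.normSq (x j) : ℝ) : ℂ) := by
  simp [dotProduct, Complex.normSq_eq_conj_mul_self]

theorem trace_ketbra (x : n → ℂ) :
    trace (ketbra x) = ((∑ j, Complex.normSq (x j) : ℝ) : ℂ) := by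
  rw [trace_vecMulVec, dotProduct_comm, star_dotProduct_self]

theorem trace_ketbra_mul (x : n → ℂ) (A : Matrix n n ℂ) :
    trace (ketbra x * A) = star x ⬝ᵥ A *ᵥ x := by
  rw [vecMulVec_mul, trace_vecMulVec, dotProduct_comm, dotProduct_mulVec]

theorem Matrix.IsHermitian.exists_sum_ketbra_eq_forall_dotProduct_mulVec_eq_zero
    {K : Matrix n n ℂ} (hK : K.IsHermitian) {ι : Type*} [Fintype ι] (x : ι → n → ℂ)
    (hx : trace ((∑ i, ketbra (x i)) * K) = 0) :
    ∃ y : ι → n → ℂ, ∑ i, ketbra (y i) = ∑ i, ketbra (x i) ∧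
      ∀ i, star (y i) ⬝ᵥ K *ᵥ y i = 0 := by
  classical
  let φ : Matrix n n ℂ →+ ℝ :=
    Complex.reAddGroupHom.comp ((traceAddMonoidHom n ℂ).comp (AddMonoidHom.mulRight K))
  have hφ : Continuous φ :=
    Complex.continuous_re.comp (continuous_id.matrix_mul continuous_const).matrix_trace
  obtain ⟨y, hy, hy0⟩ := exists_sum_ketbra_eq_forall_map_eq_zero hφ univ x
    (by change (trace (_ * K)).re = 0; rw [hx, Complex.zero_re])
  refine ⟨y, hy, fun i => Complex.ext ?_ (hK.im_star_dotProduct_mulVec_self (y i))⟩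
  simpa [φ, trace_ketbra_mul] using hy0 i (mem_univ i)

theorem exists_real_smul_normalized {y : n → ℂ} (hy : y ≠ 0) :
    ∃ p : ℝ, 0 < p ∧ ∃ r : ℝ, ∑ j, Complex.normSq ((r • y) j) = 1 ∧
      (p : ℂ) • ketbra (r • y) = ketbra y := by
  set p := ∑ j, Complex.normSq (y j)
  have hp : 0 < p := by
    obtain ⟨j, hj⟩ := Function.ne_iff.mp hy
    exact sum_pos' (fun j _ => Complex.normSq_nonneg _)
      ⟨j, mem_univ j, Complex.normSq_pos.mpr hj⟩
  refine ⟨p, hp, (√p)⁻¹, ?_, ?_⟩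
  · simp_rw [Pi.smul_apply, Complex.real_smul, Complex.normSq_mul, Complex.normSq_ofReal,
      ← mul_sum]
    rw [← mul_inv, Real.mul_self_sqrt hp.le, inv_mul_cancel₀ hp.ne']
  · rw [ketbra_real_smul, smul_smul, inv_pow, Real.sq_sqrt hp.le, ← Complex.ofReal_mul,
      mul_inv_cancel₀ hp.ne', Complex.ofReal_one, one_smul]

theorem exists_fin_ensemble {ι : Type*} [Fintype ι] (P : (n → ℂ) → Prop)
    (hP : ∀ (r : ℝ) x, P x → P (r • x)) (y : ι → n → ℂ) (hy : ∀ i, P (y i)) :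
    ∃ (m : ℕ) (p : Fin m → ℝ) (ψ : Fin m → n → ℂ), (∀ k, 0 < p k) ∧
      (∀ k, ∑ j, Complex.normSq (ψ k j) = 1) ∧
      ∑ k, (p k : ℂ) • ketbra (ψ k) = ∑ i, ketbra (y i) ∧ ∀ k, P (ψ k) := by
  classical
  choose p hp r hr hpr using fun i : {i // y i ≠ 0} => exists_real_smul_normalized i.2
  let e := (Fintype.equivFin {i // y i ≠ 0}).symm
  refine ⟨_, p ∘ e, fun k => r (e k) • y (e k), fun k => hp _, fun k => hr _, ?_,
    fun k => hP _ _ (hy _)⟩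
  simp only [Function.comp_apply]
  rw [e.sum_comp (fun i => (p i : ℂ) • ketbra (r i • y i)),
    ← Fintype.sum_subtype_add_sum_subtype (fun i => y i ≠ 0) (fun i => ketbra (y i))]
  have hzero : ∑ i : {i // ¬y i ≠ 0}, ketbra (y i) = 0 :=
    sum_eq_zero fun i _ => by simp [not_not.mp i.2]
  simp only [hpr, hzero, add_zero]

theorem stmt_7 (d : ℕ) (H ρ : Matrix (Fin d) (Fin d) ℂ) (N : ℝ)
    (hH : H.IsHermitian) (hρ : ρ.PosSemidef) (htr : ρ.trace = 1)
    (hN : (ρ * H).trace = (N : ℂ)) :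
    ∃ (n : ℕ) (p : Fin n → ℝ) (ψ : Fin n → Fin d → ℂ),
      (∀ k, 0 < p k) ∧ (∑ k, p k = 1) ∧
      (∀ k, ∑ j, Complex.normSq (ψ k j) = 1) ∧
      ρ = ∑ k, (p k : ℂ) • Matrix.vecMulVec (ψ k) (star (ψ k)) ∧
      (∀ k, ∑ i, ∑ j, (starRingEnd ℂ) (ψ k i) * H i j * ψ k j = (N : ℂ)) := by
  obtain ⟨m, x, rfl⟩ := posSemidef_iff_eq_sum_vecMulVec.mp hρ
  set K := H - (N : ℂ) • 1
  have hK : K.IsHermitian := hH.sub (isHermitian_one.smul (Complex.conj_ofReal N))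
  obtain ⟨y, hy, hyK⟩ := hK.exists_sum_ketbra_eq_forall_dotProduct_mulVec_eq_zero x
    (by simp [K, mul_sub, trace_sub, htr, hN])
  obtain ⟨l, p, ψ, hp, hψ, hsum, hψK⟩ := exists_fin_ensemble (fun v => star v ⬝ᵥ K *ᵥ v = 0)
    (fun r v hv => by simp [mulVec_smul, hv]) y hyK
  refine ⟨l, p, ψ, hp, ?_, hψ, by rw [hsum, hy], fun k => ?_⟩
  · have h := htr
    rw [← hy, ← hsum, trace_sum] at h
    simp_rw [trace_smul, trace_ketbra, hψ, Complex.ofReal_one, smul_eq_mul, mul_one] at h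
    exact_mod_cast h
  · have h := hψK k
    rw [sub_mulVec, dotProduct_sub, smul_mulVec, one_mulVec, dotProduct_smul,
      star_dotProduct_self, hψ k, sub_eq_zero] at h
    simpa [dotProduct, mulVec, mul_sum, mul_assoc] using h
end

section
/- Let Φ be a quantum channel (completely positive trace-preserving linear map) on density operators of ℂ^d, and let S denote von Neumann entropy. Suppose ρ* is a density operator with Tr(ρ* H) = N minimizing S(Φ(ρ)) over all density operators ρ with Tr(ρH) = N, where H is self-adjoint. Then there exists a pure state |ψ⟩⟨ψ| with ⟨ψ|H|ψ⟩ = N and S(Φ(|ψ⟩⟨ψ|)) ≤ S(Φ(ρ*)). Hence the constrained minimum output entropy is achieved on pure states. -/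
/-
The minimiser `ρ*` is a mixture of its eigenvectors. Its eigenvectors carrying positive weight
average `⟨u, H u⟩` to `N`, so one of them lies on each side of `N`; rotating one into the other
inside their span and applying the intermediate value theorem yields a unit vector `ψ` with
`⟨ψ, H ψ⟩ = N` and `p |ψ⟩⟨ψ| ≤ ρ*` for some `p > 0`. Then `ρ*` is a proper convex combination of
`|ψ⟩⟨ψ|` and another constrained density operator `ρ'`, and concavity of `S ∘ Φ` gives
`q S(Φ |ψ⟩⟨ψ|) + (1 - q) S(Φ ρ') ≤ S(Φ ρ*) ≤ S(Φ ρ')`, whence `S(Φ |ψ⟩⟨ψ|) ≤ S(Φ ρ*)`.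
Concavity of the von Neumann entropy itself comes from Schur concavity: in the eigenbasis of
`a A + b B`, the diagonals of `A` and `B` are doubly stochastic averages of their spectra.
-/
open Matrix
open scoped ComplexOrder

/-- Von Neumann entropy (in bits) of a matrix, via the eigenvalues of a Hermitian matrix
(junk value `0` for non-Hermitian matrices). -/
noncomputable def vNEntropy {d : ℕ} (σ : Matrix (Fin d) (Fin d) ℂ) : ℝ :=
  if h : σ.IsHermitian then (∑ i, Real.negMulLog (h.eigenvalues i)) / Real.log 2 else 0

lemma ConcaveOn.sum_le_sum_mulVec_of_mem_doublyStochastic {n : Type*} [Fintype n]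
    [DecidableEq n] {f : ℝ → ℝ} {s : Set ℝ} (hf : ConcaveOn ℝ s f) {M : Matrix n n ℝ}
    (hM : M ∈ doublyStochastic ℝ n) {x : n → ℝ} (hx : ∀ j, x j ∈ s) :
    ∑ j, f (x j) ≤ ∑ i, f ((M *ᵥ x) i) :=
  calc ∑ j, f (x j) = ∑ i, ∑ j, M i j * f (x j) := by
        rw [Finset.sum_comm]
        simp [← Finset.sum_mul, sum_col_of_mem_doublyStochastic hM]
    _ ≤ ∑ i, f ((M *ᵥ x) i) := Finset.sum_le_sum fun i _ => by
        simpa only [smul_eq_mul, mulVec, dotProduct] using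
          hf.le_map_sum (fun j _ => nonneg_of_mem_doublyStochastic hM)
            (sum_row_of_mem_doublyStochastic hM i) (fun j _ => hx j)

namespace Matrix

variable {n : Type*}

lemma convex_setOf_posSemidef {𝕜 : Type*} [RCLike 𝕜] :
    Convex ℝ {σ : Matrix n n 𝕜 | σ.PosSemidef} :=
  fun _ hA _ hB _ _ ha hb _ => (hA.smul ha).add (hB.smul hb)

variable [Fintype n]

lemma re_diag_star_mul_mul_nonneg {A : Matrix n n ℂ} (hA : A.PosSemidef) (U : Matrix n n ℂ)
    (i : n) : 0 ≤ ((star U * A * U) i i).re :=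
  (Complex.nonneg_iff.mp ((hA.conjTranspose_mul_mul_same U).diag_nonneg (i := i))).1

variable [DecidableEq n]

lemma map_normSq_mem_doublyStochastic {W : Matrix n n ℂ} (hW : W ∈ unitaryGroup n ℂ) :
    W.map Complex.normSq ∈ doublyStochastic ℝ n := by
  have hrow (i : n) : ∑ j, Complex.normSq (W i j) = 1 := by
    have := congr_fun (congr_fun (mem_unitaryGroup_iff.mp hW) i) i
    simp only [mul_apply, star_apply, RCLike.star_def, Complex.mul_conj, one_apply_eq] at this
    exact_mod_cast this
  have hcol (j : n) : ∑ i, Complex.normSq (W i j) = 1 := by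
    have := congr_fun (congr_fun (mem_unitaryGroup_iff'.mp hW) j) j
    simp only [mul_apply, star_apply, RCLike.star_def, one_apply_eq,
      ← Complex.normSq_eq_conj_mul_self] at this
    exact_mod_cast this
  exact mem_doublyStochastic_iff_sum.mpr ⟨fun i j => Complex.normSq_nonneg _, hrow, hcol⟩

lemma IsHermitian.re_diag_star_mul_mul_eq {A : Matrix n n ℂ} (hA : A.IsHermitian)
    (U : Matrix n n ℂ) (i : n) :
    ((star U * A * U) i i).re
      = ((star U * hA.eigenvectorUnitary).map Complex.normSq *ᵥ hA.eigenvalues) i := by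
  set W := star U * (hA.eigenvectorUnitary : Matrix n n ℂ)
  have hW : star U * A * U = W * diagonal (RCLike.ofReal ∘ hA.eigenvalues) * star W := by
    conv_lhs => rw [hA.spectral_theorem, Unitary.conjStarAlgAut_apply]
    simp only [W, star_mul, star_star, Matrix.mul_assoc]
  rw [hW, mul_apply, Complex.re_sum]
  refine Finset.sum_congr rfl fun j _ => ?_
  rw [mul_diagonal, star_apply, RCLike.star_def, mul_right_comm, Complex.mul_conj]
  simp [← Complex.ofReal_mul]

lemma IsHermitian.eigenvalues_eq_re_diag {A : Matrix n n ℂ} (hA : A.IsHermitian) (i : n) :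
    hA.eigenvalues i
      = ((star (hA.eigenvectorUnitary : Matrix n n ℂ) * A * hA.eigenvectorUnitary) i i).re := by
  have := hA.conjStarAlgAut_star_eigenvectorUnitary
  rw [Unitary.conjStarAlgAut_star_apply] at this
  simp [this]

lemma PosSemidef.sum_eigenvalues_le_sum_re_diag {A : Matrix n n ℂ} (hA : A.PosSemidef)
    {f : ℝ → ℝ} (hf : ConcaveOn ℝ (Set.Ici 0) f) {U : Matrix n n ℂ}
    (hU : U ∈ unitaryGroup n ℂ) :
    ∑ i, f (hA.1.eigenvalues i) ≤ ∑ i, f ((star U * A * U) i i).re := by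
  simp_rw [hA.1.re_diag_star_mul_mul_eq U]
  exact hf.sum_le_sum_mulVec_of_mem_doublyStochastic
    (map_normSq_mem_doublyStochastic (mul_mem (Unitary.star_mem hU) hA.1.eigenvectorUnitary.2))
    hA.eigenvalues_nonneg

lemma PosSemidef.sum_eigenvalues_concave {A B : Matrix n n ℂ} (hA : A.PosSemidef)
    (hB : B.PosSemidef) {f : ℝ → ℝ} (hf : ConcaveOn ℝ (Set.Ici 0) f) {a b : ℝ} (ha : 0 ≤ a)
    (hb : 0 ≤ b) (hab : a + b = 1) (hC : (a • A + b • B).IsHermitian) :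
    a * ∑ i, f (hA.1.eigenvalues i) + b * ∑ i, f (hB.1.eigenvalues i)
      ≤ ∑ i, f (hC.eigenvalues i) := by
  set U := (hC.eigenvectorUnitary : Matrix n n ℂ)
  have hU : U ∈ unitaryGroup n ℂ := hC.eigenvectorUnitary.2
  have hdiag (i : n) : hC.eigenvalues i
      = a * ((star U * A * U) i i).re + b * ((star U * B * U) i i).re := by
    simp [hC.eigenvalues_eq_re_diag, U, Matrix.mul_add, Matrix.add_mul]
  calc a * ∑ i, f (hA.1.eigenvalues i) + b * ∑ i, f (hB.1.eigenvalues i)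
      ≤ a * ∑ i, f ((star U * A * U) i i).re + b * ∑ i, f ((star U * B * U) i i).re := by
        have hA' := hA.sum_eigenvalues_le_sum_re_diag hf hU
        have hB' := hB.sum_eigenvalues_le_sum_re_diag hf hU
        gcongr
    _ = ∑ i, (a * f ((star U * A * U) i i).re + b * f ((star U * B * U) i i).re) := by
        rw [Finset.sum_add_distrib, Finset.mul_sum, Finset.mul_sum]
    _ ≤ ∑ i, f (hC.eigenvalues i) := Finset.sum_le_sum fun i _ => by
        rw [hdiag]
        exact hf.2 (re_diag_star_mul_mul_nonneg hA U i) (re_diag_star_mul_mul_nonneg hB U i)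
          ha hb hab

end Matrix

theorem concaveOn_vNEntropy (d : ℕ) :
    ConcaveOn ℝ {σ : Matrix (Fin d) (Fin d) ℂ | σ.PosSemidef} vNEntropy := by
  refine ⟨convex_setOf_posSemidef, fun A hA B hB a b ha hb hab => ?_⟩
  have hC : (a • A + b • B).PosSemidef := convex_setOf_posSemidef hA hB ha hb hab
  simp only [vNEntropy, dif_pos hA.1, dif_pos hB.1, dif_pos hC.1, smul_eq_mul]
  rw [mul_div_assoc', mul_div_assoc', ← add_div,
    div_le_div_iff_of_pos_right (Real.log_pos one_lt_two)]
  exact hA.sum_eigenvalues_concave hB Real.concaveOn_negMulLog ha hb hab hC.1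

def krausMap {n ι : Type*} [Fintype n] [Fintype ι] (E : ι → Matrix n n ℂ) :
    Matrix n n ℂ →ₗ[ℂ] Matrix n n ℂ where
  toFun ρ := ∑ k, E k * ρ * (E k)ᴴ
  map_add' X Y := by simp only [Matrix.mul_add, Matrix.add_mul, Finset.sum_add_distrib]
  map_smul' c X := by
    simp only [Matrix.mul_smul, Matrix.smul_mul, Finset.smul_sum, RingHom.id_apply]

lemma posSemidef_krausMap {n ι : Type*} [Fintype n] [Fintype ι] (E : ι → Matrix n n ℂ)
    {ρ : Matrix n n ℂ} (hρ : ρ.PosSemidef) : (krausMap E ρ).PosSemidef :=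
  posSemidef_sum _ fun k _ => hρ.mul_mul_conjTranspose_same (E k)

lemma concaveOn_vNEntropy_comp_krausMap {d : ℕ} {ι : Type*} [Fintype ι]
    (E : ι → Matrix (Fin d) (Fin d) ℂ) :
    ConcaveOn ℝ {σ | σ.PosSemidef} (vNEntropy ∘ krausMap E) :=
  ((concaveOn_vNEntropy d).comp_linearMap ((krausMap E).restrictScalars ℝ)).subset
    (fun _ hσ => posSemidef_krausMap E hσ) convex_setOf_posSemidef

open scoped MatrixOrder

lemma ConcaveOn.le_of_smul_le_of_forall_le {n : Type*} [Fintype n] {F : Matrix n n ℂ → ℝ}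
    (hF : ConcaveOn ℝ {σ | σ.PosSemidef} F) {H : Matrix n n ℂ} {N : ℂ} {ρ P : Matrix n n ℂ}
    (hρ : ρ.trace = 1) (hρH : (ρ * H).trace = N)
    (hmin : ∀ σ : Matrix n n ℂ, σ.PosSemidef → σ.trace = 1 → (σ * H).trace = N → F ρ ≤ F σ)
    (hP : P.PosSemidef) (hPtr : P.trace = 1) (hPH : (P * H).trace = N)
    {p : ℝ} (hp : 0 < p) (hle : p • P ≤ ρ) : F P ≤ F ρ := by
  -- shrinking `p` below `1` makes `ρ` a proper convex combination of `P` and a remainder `ρ'`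
  set q := min p (1 / 2)
  have hq : 0 < q := lt_min hp one_half_pos
  have hq1 : 0 < 1 - q := by linarith [min_le_right p (1 / 2)]
  set ρ' := (1 - q)⁻¹ • (ρ - q • P)
  have hρ' : ρ'.PosSemidef := by
    refine PosSemidef.smul ?_ (inv_nonneg.mpr hq1.le)
    have : ρ - q • P = (ρ - p • P) + (p - q) • P := by rw [sub_smul]; abel
    rw [this]
    exact (le_iff.mp hle).add (hP.smul (sub_nonneg.mpr (min_le_left _ _)))
  have hcomb (x : ℂ) : (1 - q)⁻¹ • (x - q • x) = x := by
    rw [show x - q • x = (1 - q) • x by rw [sub_smul, one_smul], inv_smul_smul₀ hq1.ne']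
  have hρ'tr : ρ'.trace = 1 := by
    simp only [ρ', trace_smul, trace_sub, hρ, hPtr, hcomb]
  have hρ'H : (ρ' * H).trace = N := by
    simp only [ρ', Matrix.smul_mul, Matrix.sub_mul, trace_smul, trace_sub, hρH, hPH, hcomb]
  have hsplit : q • P + (1 - q) • ρ' = ρ := by
    rw [smul_inv_smul₀ hq1.ne']
    abel
  have hconc := hF.2 hP hρ' hq.le hq1.le (by ring)
  rw [hsplit, smul_eq_mul, smul_eq_mul] at hconc
  have hrest := mul_le_mul_of_nonneg_left (hmin ρ' hρ' hρ'tr hρ'H) hq1.le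
  exact le_of_mul_le_mul_left (by linarith) hq

lemma exists_pos_weight_le_of_sum_mul_eq {ι : Type*} [Fintype ι] {w e : ι → ℝ} {N : ℝ}
    (hw : ∀ k, 0 ≤ w k) (hw1 : ∑ k, w k = 1) (he : ∑ k, w k * e k = N) :
    ∃ k, 0 < w k ∧ e k ≤ N := by
  by_contra! h
  have hsum : ∑ k, w k * N < ∑ k, w k * e k := by
    obtain ⟨k, -, hk⟩ := Finset.exists_ne_zero_of_sum_ne_zero (hw1 ▸ one_ne_zero)
    refine Finset.sum_lt_sum (fun j _ => ?_) ⟨k, Finset.mem_univ k, ?_⟩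
    · rcases (hw j).eq_or_lt with hj | hj
      · simp [← hj]
      · exact mul_le_mul_of_nonneg_left (h j hj).le hj.le
    · have hk' := (hw k).lt_of_ne' hk
      exact mul_lt_mul_of_pos_left (h k hk') hk'
  rw [← Finset.sum_mul, hw1, one_mul, he] at hsum
  exact hsum.false

namespace Matrix

variable {n : Type*}

lemma PosSemidef.smul_le_smul {𝕜 : Type*} [RCLike 𝕜] {X : Matrix n n 𝕜} (hX : X.PosSemidef)
    {p q : ℝ} (h : p ≤ q) : p • X ≤ q • X := by
  rw [le_iff, ← sub_smul]
  exact hX.smul (sub_nonneg.mpr h)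

open Real in
lemma vecMulVec_rotate_add (u w : n → ℂ) (t : ℝ) :
    vecMulVec (cos t • u + sin t • w) (star (cos t • u + sin t • w))
      + vecMulVec (sin t • u - cos t • w) (star (sin t • u - cos t • w))
      = vecMulVec u (star u) + vecMulVec w (star w) := by
  have h : (cos t : ℂ) ^ 2 + (sin t : ℂ) ^ 2 = 1 := by exact_mod_cast cos_sq_add_sin_sq t
  ext a b
  simp only [add_apply, vecMulVec_apply, Pi.add_apply, Pi.sub_apply, Pi.smul_apply, star_add,
    star_sub, star_smul, Pi.star_apply, Complex.real_smul, star_trivial]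
  linear_combination (u a * star (u b) + w a * star (w b)) * h

variable [Fintype n]

open Real in
lemma smul_vecMulVec_rotate_le (u w : n → ℂ) (t : ℝ) {p : ℝ} (hp : 0 ≤ p) :
    p • vecMulVec (cos t • u + sin t • w) (star (cos t • u + sin t • w))
      ≤ p • (vecMulVec u (star u) + vecMulVec w (star w)) := by
  rw [le_iff, ← smul_sub, ← vecMulVec_rotate_add u w t, add_sub_cancel_left]
  exact (posSemidef_vecMulVec_self_star _).smul hp

lemma trace_vecMulVec_star {R : Type*} [CommSemiring R] [StarRing R] (ψ : n → R) :
    (vecMulVec ψ (star ψ)).trace = star ψ ⬝ᵥ ψ := by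
  rw [trace_vecMulVec, dotProduct_comm]

lemma trace_vecMulVec_star_mul {R : Type*} [CommSemiring R] [StarRing R] (ψ : n → R)
    (H : Matrix n n R) :
    (vecMulVec ψ (star ψ) * H).trace = star ψ ⬝ᵥ H *ᵥ ψ := by
  rw [vecMulVec_mul, trace_vecMulVec, dotProduct_comm, dotProduct_mulVec]

lemma IsHermitian.coe_re_star_dotProduct_mulVec {H : Matrix n n ℂ} (hH : H.IsHermitian)
    (x : n → ℂ) : ((star x ⬝ᵥ H *ᵥ x).re : ℂ) = star x ⬝ᵥ H *ᵥ x :=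
  Complex.ext rfl (by simpa using (hH.im_star_dotProduct_mulVec_self x).symm)

open Real in
lemma star_dotProduct_rotate {u w : n → ℂ} (hu : star u ⬝ᵥ u = 1) (hw : star w ⬝ᵥ w = 1)
    (huw : star u ⬝ᵥ w = 0) (t : ℝ) :
    star (cos t • u + sin t • w) ⬝ᵥ (cos t • u + sin t • w) = 1 := by
  have h : (cos t : ℂ) ^ 2 + (sin t : ℂ) ^ 2 = 1 := by exact_mod_cast cos_sq_add_sin_sq t
  have hwu : star w ⬝ᵥ u = 0 := by rw [star_dotProduct, huw, star_zero]
  simp only [star_add, star_smul, star_trivial, add_dotProduct, dotProduct_add, smul_dotProduct,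
    dotProduct_smul, hu, hw, huw, hwu, Complex.real_smul]
  linear_combination h

open Real in
lemma IsHermitian.exists_rotate_quadratic_eq {H : Matrix n n ℂ} (hH : H.IsHermitian)
    {u w : n → ℂ} {N : ℝ} (hu : (star u ⬝ᵥ H *ᵥ u).re ≤ N) (hw : N ≤ (star w ⬝ᵥ H *ᵥ w).re) :
    ∃ t : ℝ, star (cos t • u + sin t • w) ⬝ᵥ H *ᵥ (cos t • u + sin t • w) = N := by
  have hcont : Continuous fun t : ℝ =>
      (star (cos t • u + sin t • w) ⬝ᵥ H *ᵥ (cos t • u + sin t • w)).re := by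
    fun_prop
  obtain ⟨t, -, ht⟩ := intermediate_value_Icc pi_div_two_pos.le hcont.continuousOn
    (show N ∈ Set.Icc _ _ by simpa using And.intro hu hw)
  exact ⟨t, by rw [← hH.coe_re_star_dotProduct_mulVec]; exact congrArg _ ht⟩

lemma IsHermitian.exists_smul_vecMulVec_le_of_orthonormal {H : Matrix n n ℂ} (hH : H.IsHermitian)
    {u w : n → ℂ} (hu : star u ⬝ᵥ u = 1) (hw : star w ⬝ᵥ w = 1) (huw : star u ⬝ᵥ w = 0)
    {N : ℝ} (huN : (star u ⬝ᵥ H *ᵥ u).re ≤ N) (hwN : N ≤ (star w ⬝ᵥ H *ᵥ w).re)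
    {a b : ℝ} (ha : 0 < a) (hb : 0 < b) {ρ : Matrix n n ℂ}
    (hle : a • vecMulVec u (star u) + b • vecMulVec w (star w) ≤ ρ) :
    ∃ ψ : n → ℂ, star ψ ⬝ᵥ ψ = 1 ∧ star ψ ⬝ᵥ H *ᵥ ψ = N ∧
      ∃ p : ℝ, 0 < p ∧ p • vecMulVec ψ (star ψ) ≤ ρ := by
  obtain ⟨t, ht⟩ := hH.exists_rotate_quadratic_eq huN hwN
  refine ⟨_, star_dotProduct_rotate hu hw huw t, ht, min a b, lt_min ha hb, ?_⟩
  calc _ ≤ min a b • (vecMulVec u (star u) + vecMulVec w (star w)) :=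
        smul_vecMulVec_rotate_le u w t (le_min ha.le hb.le)
    _ ≤ a • vecMulVec u (star u) + b • vecMulVec w (star w) := by
        rw [smul_add]
        exact add_le_add ((posSemidef_vecMulVec_self_star u).smul_le_smul (min_le_left a b))
          ((posSemidef_vecMulVec_self_star w).smul_le_smul (min_le_right a b))
    _ ≤ ρ := hle

variable [DecidableEq n]

lemma IsHermitian.eq_sum_smul_vecMulVec {A : Matrix n n ℂ} (hA : A.IsHermitian) :
    A = ∑ r, hA.eigenvalues r •
      vecMulVec ⇑(hA.eigenvectorBasis r) (star ⇑(hA.eigenvectorBasis r)) := by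
  conv_lhs => rw [hA.spectral_theorem, Unitary.conjStarAlgAut_apply]
  ext a b
  rw [mul_apply, sum_apply]
  refine Finset.sum_congr rfl fun r _ => ?_
  simp only [mul_diagonal, star_apply, smul_apply, vecMulVec_apply, Complex.real_smul]
  simp [mul_comm, mul_assoc]

lemma IsHermitian.star_eigenvectorBasis_dotProduct {A : Matrix n n ℂ} (hA : A.IsHermitian)
    (i j : n) : star ⇑(hA.eigenvectorBasis i) ⬝ᵥ ⇑(hA.eigenvectorBasis j)
      = if i = j then 1 else 0 := by
  rw [dotProduct_comm, ← EuclideanSpace.inner_eq_star_dotProduct]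
  exact orthonormal_iff_ite.mp hA.eigenvectorBasis.orthonormal i j

lemma IsHermitian.trace_mul_eq_sum {A : Matrix n n ℂ} (hA : A.IsHermitian) (H : Matrix n n ℂ) :
    (A * H).trace = ∑ r, hA.eigenvalues r •
      (star ⇑(hA.eigenvectorBasis r) ⬝ᵥ H *ᵥ ⇑(hA.eigenvectorBasis r)) := by
  conv_lhs => rw [hA.eq_sum_smul_vecMulVec]
  simp only [Finset.sum_mul, trace_sum, Matrix.smul_mul, trace_smul, trace_vecMulVec_star_mul]

lemma PosSemidef.exists_smul_vecMulVec_le {ρ H : Matrix n n ℂ} (hρ : ρ.PosSemidef)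
    (htr : ρ.trace = 1) (hH : H.IsHermitian) {N : ℝ} (hE : (ρ * H).trace = N) :
    ∃ ψ : n → ℂ, star ψ ⬝ᵥ ψ = 1 ∧ star ψ ⬝ᵥ H *ᵥ ψ = N ∧
      ∃ p : ℝ, 0 < p ∧ p • vecMulVec ψ (star ψ) ≤ ρ := by
  set lam := hρ.1.eigenvalues
  set u : n → n → ℂ := fun r => ⇑(hρ.1.eigenvectorBasis r)
  have hspec : ρ = ∑ r, lam r • vecMulVec (u r) (star (u r)) := hρ.1.eq_sum_smul_vecMulVec
  have horth : ∀ i j, star (u i) ⬝ᵥ u j = if i = j then 1 else 0 :=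
    hρ.1.star_eigenvectorBasis_dotProduct
  have hnonneg (r : n) : 0 ≤ lam r • vecMulVec (u r) (star (u r)) :=
    ((posSemidef_vecMulVec_self_star _).smul (hρ.eigenvalues_nonneg r)).nonneg
  have hsum : ∑ r, lam r = 1 := by
    apply Complex.ofReal_injective
    push_cast
    exact htr ▸ hρ.1.trace_eq_sum_eigenvalues.symm
  have hmean : ∑ r, lam r * (star (u r) ⬝ᵥ H *ᵥ u r).re = N := by
    have := hρ.1.trace_mul_eq_sum H
    rw [hE] at this
    simpa [Complex.re_sum] using (congrArg Complex.re this).symm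
  obtain ⟨i, hi, hiN⟩ :=
    exists_pos_weight_le_of_sum_mul_eq (w := lam) hρ.eigenvalues_nonneg hsum hmean
  obtain ⟨j, hj, hjN⟩ := exists_pos_weight_le_of_sum_mul_eq (w := lam)
    (e := fun r => -(star (u r) ⬝ᵥ H *ᵥ u r).re) (N := -N) hρ.eigenvalues_nonneg hsum
    (by simp only [mul_neg, Finset.sum_neg_distrib, hmean])
  by_cases hij : i = j
  · subst hij
    refine ⟨u i, by simpa using horth i i, ?_, lam i, hi, ?_⟩
    · rw [← hH.coe_re_star_dotProduct_mulVec, le_antisymm hiN (by linarith)]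
    · rw [hspec]
      exact Finset.single_le_sum (fun r _ => hnonneg r) (Finset.mem_univ i)
  refine hH.exists_smul_vecMulVec_le_of_orthonormal (by simpa using horth i i)
    (by simpa using horth j j) (by simpa [hij] using horth i j) hiN (by linarith) hi hj ?_
  rw [← Finset.sum_pair (f := fun r => lam r • vecMulVec (u r) (star (u r))) hij]
  conv_rhs => rw [hspec]
  exact Finset.sum_le_sum_of_subset_of_nonneg (Finset.subset_univ _) fun r _ _ => hnonneg r

end Matrix

theorem stmt_9_general (d : ℕ) (Φ : Matrix (Fin d) (Fin d) ℂ → Matrix (Fin d) (Fin d) ℂ)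
    (H : Matrix (Fin d) (Fin d) ℂ) (hH : H.IsHermitian) (N : ℝ)
    -- Φ is completely positive: it admits a Kraus representation
    (hCP : ∃ (m : ℕ) (E : Fin m → Matrix (Fin d) (Fin d) ℂ),
      ∀ ρ, Φ ρ = ∑ k, E k * ρ * (E k)ᴴ)
    (ρstar : Matrix (Fin d) (Fin d) ℂ) (hρ : ρstar.PosSemidef) (htr : ρstar.trace = 1)
    (hE : (ρstar * H).trace = (N : ℂ))
    -- ρstar minimizes the output entropy over constrained density operators
    (hmin : ∀ ρ : Matrix (Fin d) (Fin d) ℂ, ρ.PosSemidef → ρ.trace = 1 →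
      (ρ * H).trace = (N : ℂ) → vNEntropy (Φ ρstar) ≤ vNEntropy (Φ ρ)) :
    ∃ ψ : Fin d → ℂ,
      (∑ j, Complex.normSq (ψ j) = 1) ∧
      (∑ i, ∑ j, (starRingEnd ℂ) (ψ i) * H i j * ψ j = (N : ℂ)) ∧
      vNEntropy (Φ (Matrix.vecMulVec ψ (star ψ))) ≤ vNEntropy (Φ ρstar) := by
  obtain ⟨m, E, hK⟩ := hCP
  obtain rfl : Φ = krausMap E := funext hK
  obtain ⟨ψ, hψ, hψH, p, hp, hle⟩ := hρ.exists_smul_vecMulVec_le htr hH hE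
  refine ⟨ψ, ?_, ?_, ?_⟩
  · have : ((∑ j, Complex.normSq (ψ j) : ℝ) : ℂ) = 1 := by
      rw [← hψ]
      push_cast
      simp [dotProduct, Complex.normSq_eq_conj_mul_self]
    exact_mod_cast this
  · rw [← hψH]
    simp [dotProduct, mulVec, Finset.mul_sum, mul_assoc]
  · exact (concaveOn_vNEntropy_comp_krausMap E).le_of_smul_le_of_forall_le htr hE hmin
      (posSemidef_vecMulVec_self_star ψ) (by rw [trace_vecMulVec_star, hψ])
      (by rw [trace_vecMulVec_star_mul, hψH]) hp hle

theorem stmt_9 (d : ℕ) (Φ : Matrix (Fin d) (Fin d) ℂ → Matrix (Fin d) (Fin d) ℂ)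
    (H : Matrix (Fin d) (Fin d) ℂ) (hH : H.IsHermitian) (N : ℝ)
    -- Φ is completely positive: it admits a Kraus representation
    (hCP : ∃ (m : ℕ) (E : Fin m → Matrix (Fin d) (Fin d) ℂ),
      ∀ ρ, Φ ρ = ∑ k, E k * ρ * (E k)ᴴ)
    -- Φ is trace preserving
    (hTP : ∀ ρ, (Φ ρ).trace = ρ.trace)
    (ρstar : Matrix (Fin d) (Fin d) ℂ) (hρ : ρstar.PosSemidef) (htr : ρstar.trace = 1)
    (hE : (ρstar * H).trace = (N : ℂ))
    -- ρstar minimizes the output entropy over constrained density operators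
    (hmin : ∀ ρ : Matrix (Fin d) (Fin d) ℂ, ρ.PosSemidef → ρ.trace = 1 →
      (ρ * H).trace = (N : ℂ) → vNEntropy (Φ ρstar) ≤ vNEntropy (Φ ρ)) :
    ∃ ψ : Fin d → ℂ,
      (∑ j, Complex.normSq (ψ j) = 1) ∧
      (∑ i, ∑ j, (starRingEnd ℂ) (ψ i) * H i j * ψ j = (N : ℂ)) ∧
      vNEntropy (Φ (Matrix.vecMulVec ψ (star ψ))) ≤ vNEntropy (Φ ρstar) :=
  stmt_9_general d Φ H hH N hCP ρstar hρ htr hE hmin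
end
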